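/- With T as above (eigenvalues with nonpositive real parts, no nontrivial Jordan structure on the imaginary axis) and w a fixed point of T, the attraction domain {v ∈ V : exp(tT)v → w as t→∞} equals the affine subspace w + E_−, where E_− is the sum of the generalized eigenspaces of T for eigenvalues with strictly negative real part. -/

import Mathlib

/-!
On a generalized eigenspace with `Re μ < 0`, `exp(tT)` acts as `e^{tμ}` times a polynomial in `t`,
so `exp(tT)` tends to `0` on `E₋`. Conversely, the hypotheses give `V = E₋ + E₀`, where `E₀` is
spanned by eigenvectors with purely imaginary eigenvalues. On `E₀` the flow is recurrent: by
compactness of the torus, `exp(tₖT) b → b` along some `tₖ → ∞`, so the `E₀`-component of a vector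
attracted to `0` vanishes. Finally `exp(tT) w = w`, so `v` is attracted to `w` iff `v - w` is
attracted to `0`.
-/

open Filter Finset Topology NormedSpace
open scoped Nat

theorem exists_tendsto_pow_nhds_one {G : Type*} [Group G] [TopologicalSpace G]
    [IsTopologicalGroup G] [CompactSpace G] [FirstCountableTopology G] (g : G) :
    ∃ d : ℕ → ℕ, Tendsto d atTop atTop ∧ Tendsto (fun k => g ^ d k) atTop (𝓝 1) := by
  obtain ⟨a, ψ, hψ, ha⟩ := CompactSpace.tendsto_subseq (fun n => g ^ n)
  have ha₂ : Tendsto (fun k => g ^ ψ (k + k)) atTop (𝓝 a) :=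
    ha.comp (tendsto_atTop_mono (fun k => Nat.le_add_left k k) tendsto_id)
  refine ⟨fun k => ψ (k + k) - ψ k, tendsto_atTop_mono (fun k => ?_) tendsto_id, ?_⟩
  · have := hψ.add_le_nat k k
    dsimp
    omega
  · have hlim : Tendsto (fun k => g ^ ψ (k + k) * (g ^ ψ k)⁻¹) atTop (𝓝 (a * a⁻¹)) :=
      ha₂.mul ha.inv
    rw [mul_inv_cancel] at hlim
    exact hlim.congr fun k => (pow_sub g (hψ.monotone (Nat.le_add_left k k))).symm

namespace Module.End

variable {K W : Type*} [Field K] [AddCommGroup W] [Module K W]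

theorem maxGenEigenspace_eq_eigenspace_of_ker_sq {f : End K W} {μ : K}
    (h : LinearMap.ker ((f - μ • 1) ^ 2) = LinearMap.ker (f - μ • 1)) :
    f.maxGenEigenspace μ = f.eigenspace μ := by
  refine le_antisymm (fun x hx => ?_) eigenspace_le_maxGenEigenspace
  obtain ⟨k, hk⟩ := (mem_maxGenEigenspace f μ x).mp hx
  have hker := ker_pow_constant (f := f - μ • 1) (k := 1) (by rw [pow_one, h]) k
  rw [eigenspace_def, ← pow_one (f - μ • 1), hker, LinearMap.mem_ker, pow_add, mul_apply, hk,
    map_zero]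

variable {V : Type*} [AddCommGroup V] [Module ℂ V]

/-- The subspace `E₋` of the statement. -/
def stableSubspace (f : End ℂ V) : Submodule ℂ V :=
  ⨆ μ ∈ {μ : ℂ | μ.re < 0}, f.maxGenEigenspace μ

theorem stableSubspace_sup_iSup_eigenspace_eq_top [FiniteDimensional ℂ V] {f : End ℂ V}
    (hspec : ∀ μ : ℂ, f.HasEigenvalue μ → μ.re ≤ 0)
    (hsemi : ∀ μ : ℂ, μ.re = 0 → LinearMap.ker ((f - μ • 1) ^ 2) = LinearMap.ker (f - μ • 1)) :
    f.stableSubspace ⊔ ⨆ μ ∈ {μ : ℂ | μ.re = 0}, f.eigenspace μ = ⊤ := by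
  rw [eq_top_iff, ← iSup_maxGenEigenspace_eq_top f]
  refine iSup_le fun μ => ?_
  by_cases hbot : f.maxGenEigenspace μ = ⊥
  · simp [hbot]
  have hμ : f.HasEigenvalue μ := HasUnifEigenvalue.lt zero_lt_one hbot
  rcases (hspec μ hμ).lt_or_eq with hneg | hzero
  · exact le_sup_of_le_left (le_biSup (fun μ => f.maxGenEigenspace μ) hneg)
  · rw [maxGenEigenspace_eq_eigenspace_of_ker_sq (hsemi μ hzero)]
    exact le_sup_of_le_right (le_biSup (fun μ => f.eigenspace μ) hzero)

end Module.End

section Exp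

variable {𝕜 E : Type*} [RCLike 𝕜] [NormedAddCommGroup E] [NormedSpace 𝕜 E] [CompleteSpace E]

theorem exp_apply_eq_sum_of_pow_apply_eq_zero (N : E →L[𝕜] E) {k : ℕ} {u : E}
    (hu : (N ^ k) u = 0) : exp N u = ∑ n ∈ range k, (n !⁻¹ : 𝕜) • (N ^ n) u := by
  have hsum : HasSum (fun n => (n !⁻¹ : 𝕜) • (N ^ n) u) (exp N u) :=
    (exp_series_hasSum_exp' (𝕂 := 𝕜) N).mapL (ContinuousLinearMap.apply 𝕜 E u)
  refine hsum.unique (hasSum_sum_of_ne_finset_zero fun n hn => ?_)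
  rw [mem_range, not_lt] at hn
  rw [← Nat.sub_add_cancel hn, pow_add, mul_apply_eq_comp, hu, map_zero, smul_zero]

end Exp

section Flow

variable {V : Type*} [NormedAddCommGroup V] [NormedSpace ℂ V] [CompleteSpace V]

theorem exp_smul_apply_of_pow_sub_smul_apply_eq_zero (T : V →L[ℂ] V) (μ c : ℂ) {k : ℕ} {u : V}
    (hu : ((T - μ • 1) ^ k) u = 0) :
    exp (c • T) u = Complex.exp (c * μ) • ∑ n ∈ range k, (c ^ n / n !) • ((T - μ • 1) ^ n) u := by
  set N := T - μ • 1
  have hsplit : c • T = algebraMap ℂ (V →L[ℂ] V) (c * μ) + c • N := by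
    rw [Algebra.algebraMap_eq_smul_one, smul_sub, mul_smul]
    abel
  have hcN : ((c • N) ^ k) u = 0 := by
    rw [smul_pow, smul_apply, hu, smul_zero]
  have hball : ∀ x : V →L[ℂ] V, x ∈ Metric.eball 0 (expSeries ℂ (V →L[ℂ] V)).radius := by
    simp [expSeries_radius_eq_top]
  rw [hsplit, exp_add_of_commute_of_mem_ball (Algebra.commutes _ _) (hball _) (hball _),
    ← algebraMap_exp_comm, mul_apply_eq_comp,
    exp_apply_eq_sum_of_pow_apply_eq_zero _ hcN, Algebra.algebraMap_eq_smul_one,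
    smul_apply, one_apply_eq_self, ← Complex.exp_eq_exp_ℂ]
  congr 1
  refine sum_congr rfl fun n _ => ?_
  rw [smul_pow, smul_apply, smul_smul, div_eq_inv_mul]

theorem exp_smul_apply_of_apply_eq_smul (T : V →L[ℂ] V) {μ : ℂ} (c : ℂ) {u : V}
    (hu : T u = μ • u) : exp (c • T) u = Complex.exp (c * μ) • u := by
  simpa using exp_smul_apply_of_pow_sub_smul_apply_eq_zero T μ c (k := 1) (u := u) (by simp [hu])

theorem tendsto_ofReal_pow_mul_cexp_mul_atTop_nhds_zero {μ : ℂ} (hμ : μ.re < 0) (n : ℕ) :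
    Tendsto (fun t : ℝ => (t : ℂ) ^ n * Complex.exp (t * μ)) atTop (𝓝 0) := by
  rw [tendsto_zero_iff_norm_tendsto_zero]
  refine (tendsto_rpow_mul_exp_neg_mul_atTop_nhds_zero n (-μ.re) (by linarith)).congr' ?_
  filter_upwards [eventually_ge_atTop 0] with t ht
  simp [Complex.norm_exp, abs_of_nonneg ht, mul_comm]

theorem tendsto_exp_smul_apply_of_mem_maxGenEigenspace (T : V →L[ℂ] V) {μ : ℂ} (hμ : μ.re < 0)
    {u : V} (hu : u ∈ Module.End.maxGenEigenspace (T : V →ₗ[ℂ] V) μ) :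
    Tendsto (fun t : ℝ => exp (t • T) u) atTop (𝓝 0) := by
  obtain ⟨k, hk⟩ := (Module.End.mem_maxGenEigenspace _ _ _).mp hu
  have hcoe : (((T - μ • 1) ^ k : V →L[ℂ] V) : V →ₗ[ℂ] V) = ((T : V →ₗ[ℂ] V) - μ • 1) ^ k := by
    rw [ContinuousLinearMap.toLinearMap_pow]
    rfl
  have hk' : ((T - μ • 1) ^ k) u = 0 := by
    rw [← ContinuousLinearMap.coe_coe, hcoe, hk]
  have hexp : ∀ t : ℝ, exp (t • T) u = ∑ n ∈ range k,
      ((t : ℂ) ^ n * Complex.exp (t * μ) / n !) • ((T - μ • 1) ^ n) u := by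
    intro t
    rw [← Complex.coe_smul, exp_smul_apply_of_pow_sub_smul_apply_eq_zero T μ _ hk', smul_sum]
    refine sum_congr rfl fun n _ => ?_
    rw [smul_smul]
    ring_nf
  simp_rw [hexp]
  rw [← sum_const_zero (s := range k)]
  refine tendsto_finsetSum _ fun n _ => ?_
  simpa using ((tendsto_ofReal_pow_mul_cexp_mul_atTop_nhds_zero hμ n).div_const (n ! : ℂ)).smul_const
    (((T - μ • 1) ^ n) u)

variable (T : V →L[ℂ] V)

theorem tendsto_exp_smul_apply_of_mem_stableSubspace {u : V}
    (hu : u ∈ Module.End.stableSubspace (T : V →ₗ[ℂ] V)) :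
    Tendsto (fun t : ℝ => exp (t • T) u) atTop (𝓝 0) := by
  rw [Module.End.stableSubspace, iSup_subtype'] at hu
  induction hu using Submodule.iSup_induction' with
  | mem μ x hx => exact tendsto_exp_smul_apply_of_mem_maxGenEigenspace T μ.2 hx
  | zero => simp
  | add x y _ _ hx hy => simpa using hx.add hy

theorem exists_tendsto_exp_smul_sum_apply_self {ι : Type*} [Fintype ι] {μ : ι → ℂ}
    (hμ : ∀ i, (μ i).re = 0) {y : ι → V} (hy : ∀ i, T (y i) = μ i • y i) :
    ∃ t : ℕ → ℝ, Tendsto t atTop atTop ∧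
      Tendsto (fun k => exp (t k • T) (∑ i, y i)) atTop (𝓝 (∑ i, y i)) := by
  obtain ⟨d, hd, hpow⟩ := exists_tendsto_pow_nhds_one (fun i => Circle.exp (μ i).im)
  refine ⟨fun k => d k, tendsto_natCast_atTop_atTop.comp hd, ?_⟩
  simp_rw [map_sum]
  refine tendsto_finsetSum _ fun i _ => ?_
  have hcoe : Tendsto (fun k => ((Circle.exp (μ i).im ^ d k : Circle) : ℂ)) atTop (𝓝 1) := by
    exact ((continuous_subtype_val.comp (continuous_apply i)).tendsto 1).comp hpow
  have hlim := hcoe.smul_const (y i)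
  rw [one_smul] at hlim
  refine hlim.congr fun k => ?_
  rw [← Complex.coe_smul, exp_smul_apply_of_apply_eq_smul T _ (hy i), ← Circle.exp_natCast_mul,
    Circle.coe_exp]
  congr 2
  apply Complex.ext <;> simp [hμ i]

theorem exists_tendsto_exp_smul_apply_self_of_mem_iSup_eigenspace {s : Set ℂ}
    (hs : ∀ μ ∈ s, μ.re = 0) {b : V} (hb : b ∈ ⨆ μ ∈ s, Module.End.eigenspace (T : V →ₗ[ℂ] V) μ) :
    ∃ t : ℕ → ℝ, Tendsto t atTop atTop ∧
      Tendsto (fun k => exp (t k • T) b) atTop (𝓝 b) := by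
  rw [iSup_subtype'] at hb
  obtain ⟨F, hF⟩ := Submodule.mem_iSup_iff_exists_finset.mp hb
  obtain ⟨y, rfl⟩ := (Submodule.mem_iSup_finset_iff_exists_sum _ _).mp hF
  rw [← sum_coe_sort F]
  exact exists_tendsto_exp_smul_sum_apply_self T (fun i => hs _ i.1.2)
    (fun i => Module.End.mem_eigenspace_iff.mp (y i).2)

theorem mem_stableSubspace_of_tendsto_exp_smul_apply [FiniteDimensional ℂ V]
    (hspec : ∀ μ : ℂ, Module.End.HasEigenvalue (T : V →ₗ[ℂ] V) μ → μ.re ≤ 0)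
    (hsemi : ∀ μ : ℂ, μ.re = 0 →
      LinearMap.ker (((T : V →ₗ[ℂ] V) - μ • 1) ^ 2) = LinearMap.ker ((T : V →ₗ[ℂ] V) - μ • 1))
    {u : V} (hu : Tendsto (fun t : ℝ => exp (t • T) u) atTop (𝓝 0)) :
    u ∈ Module.End.stableSubspace (T : V →ₗ[ℂ] V) := by
  have hu_mem := Submodule.mem_top (R := ℂ) (x := u)
  rw [← Module.End.stableSubspace_sup_iSup_eigenspace_eq_top hspec hsemi] at hu_mem
  obtain ⟨a, ha, b, hb, rfl⟩ := Submodule.mem_sup.mp hu_mem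
  have hb_decay : Tendsto (fun t : ℝ => exp (t • T) b) atTop (𝓝 0) := by
    simpa using hu.sub (tendsto_exp_smul_apply_of_mem_stableSubspace T ha)
  obtain ⟨t, ht, hb_rec⟩ :=
    exists_tendsto_exp_smul_apply_self_of_mem_iSup_eigenspace T (fun _ h => h) hb
  rw [tendsto_nhds_unique hb_rec (hb_decay.comp ht), add_zero]
  exact ha

end Flow

/-- The attraction domain of a fixed point `w` of the linear flow `exp(tT)` is the affine
subspace `w + E₋`, where `E₋` is the sum of the generalized eigenspaces of `T` for
eigenvalues with strictly negative real part. -/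
theorem attraction_domain_eq_affine
    {V : Type*} [NormedAddCommGroup V] [NormedSpace ℂ V] [FiniteDimensional ℂ V]
    (T : V →L[ℂ] V)
    (hspec : ∀ μ : ℂ, Module.End.HasEigenvalue (T : V →ₗ[ℂ] V) μ → μ.re ≤ 0)
    (hsemi : ∀ μ : ℂ, μ.re = 0 →
      LinearMap.ker (((T : V →ₗ[ℂ] V) - μ • 1) ^ 2) = LinearMap.ker ((T : V →ₗ[ℂ] V) - μ • 1))
    (w : V) (hw : T w = 0) :
    {v : V | Tendsto (fun t : ℝ => NormedSpace.exp (t • T) v) atTop (nhds w)}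
      = {v : V | v - w ∈
          ⨆ μ ∈ {μ : ℂ | μ.re < 0}, Module.End.maxGenEigenspace (T : V →ₗ[ℂ] V) μ} := by
  have hfix (t : ℝ) : exp (t • T) w = w := by
    rw [← Complex.coe_smul, exp_smul_apply_of_apply_eq_smul T _ (μ := 0) (by simpa using hw),
      mul_zero, Complex.exp_zero, one_smul]
  ext v
  have hshift : (fun t : ℝ => exp (t • T) (v - w)) = fun t => exp (t • T) v - w := by
    simp [map_sub, hfix]
  rw [Set.mem_ofPred_eq, Set.mem_ofPred_eq, ← tendsto_sub_nhds_zero_iff, ← hshift]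
  exact ⟨mem_stableSubspace_of_tendsto_exp_smul_apply T hspec hsemi,
    tendsto_exp_smul_apply_of_mem_stableSubspace T⟩
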